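/- Let T be a finite tree (a finite connected acyclic simple graph) and let G be the line graph of T, i.e., the simple graph whose vertices are the edges of T, with two distinct edges adjacent in G if and only if they share an endpoint in T. Then for every weight function w : V(G) → ℕ, γ^i_w(G) = γ_w(G); that is, the weighted independent domination number equals the weighted domination number. -/

import Mathlib

open Finset

variable {V : Type*}

/-- The closed neighborhood of a vertex `v`: `{v}` together with its neighbors. -/
def closedNbr [Fintype V] [DecidableEq V] (G : SimpleGraph V) [DecidableRel G.Adj]
    (v : V) : Finset V :=
  insert v (G.neighborFinset v)

/-- `f` `w`-dominates the set `U`: for every `u ∈ U`, the `f`-sum over the closed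
neighborhood of `u` is at least `w u`. -/
def WDominates [Fintype V] [DecidableEq V] (G : SimpleGraph V) [DecidableRel G.Adj]
    (w : V → ℕ) (f : V → ℕ) (U : Set V) : Prop :=
  ∀ u ∈ U, w u ≤ ∑ x ∈ closedNbr G u, f x

/-- The weighted domination number `γ_w(G)`: the minimum size of a `w`-dominating function. -/
noncomputable def gammaW [Fintype V] [DecidableEq V] (G : SimpleGraph V)
    [DecidableRel G.Adj] (w : V → ℕ) : ℕ :=
  sInf {n | ∃ f : V → ℕ, WDominates G w f Set.univ ∧ ∑ v, f v = n}

/-- The weighted independent domination number `γ^i_w(G)`: the maximum, over all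
independent sets `I`, of the minimum size of a function `w`-dominating `I`. -/
noncomputable def gammaIW [Fintype V] [DecidableEq V] (G : SimpleGraph V)
    [DecidableRel G.Adj] (w : V → ℕ) : ℕ :=
  sSup {m | ∃ I : Set V,
    (∀ u ∈ I, ∀ v ∈ I, u ≠ v → ¬ G.Adj u v) ∧
    m = sInf {n | ∃ f : V → ℕ, WDominates G w f I ∧ ∑ v, f v = n}}

/-- A set is dispersed if every two distinct vertices in it are at distance at least 3:
they are non-adjacent and have no common neighbor. -/
def Dispersed (G : SimpleGraph V) (D : Set V) : Prop :=
  ∀ u ∈ D, ∀ v ∈ D, u ≠ v → ¬ G.Adj u v ∧ ∀ x, ¬(G.Adj u x ∧ G.Adj x v)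

/-- `ρ_w(G)`: the maximum total weight of a dispersed set. -/
noncomputable def rhoW [Fintype V] (G : SimpleGraph V) (w : V → ℕ) : ℕ :=
  sSup {m | ∃ D : Finset V, Dispersed G ↑D ∧ ∑ v ∈ D, w v = m}

/-!
In every graph `ρ_w ≤ γ^i_w ≤ γ_w`, because the closed neighbourhoods of a dispersed set are
disjoint and a dispersed set is independent. For `γ_w ≤ ρ_w` it suffices that every nonempty
vertex set `S` has some `e ∈ S` and `e'` with `N[e']` containing all of `S` within distance two
of `e`: lowering `w` by `w e` on `N[e']` decreases `γ_w` by at most `w e`, and a dispersed set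
found by induction for the lowered weight either meets `N[e']`, and then already serves for `w`,
or stays dispersed after adding `e`. In the line graph of a tree rooted at `r`, take for `e` a
deepest edge of `S` and for `e'` the edge from its upper endpoint `v` to the parent of `v` (or `e`
itself if `v = r`).
-/

open SimpleGraph

section Domination

variable [Fintype V] [DecidableEq V] {G : SimpleGraph V} [DecidableRel G.Adj]

lemma mem_closedNbr {u v : V} : u ∈ closedNbr G v ↔ u = v ∨ G.Adj v u := by
  rw [closedNbr, mem_insert, mem_neighborFinset]

lemma self_mem_closedNbr (v : V) : v ∈ closedNbr G v := mem_insert_self _ _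

lemma not_disjoint_closedNbr_self (v : V) : ¬ Disjoint (closedNbr G v) (closedNbr G v) :=
  not_disjoint_iff.mpr ⟨v, self_mem_closedNbr v, self_mem_closedNbr v⟩

lemma mem_closedNbr_comm {u v : V} : u ∈ closedNbr G v ↔ v ∈ closedNbr G u := by
  rw [mem_closedNbr, mem_closedNbr, eq_comm, G.adj_comm]

lemma disjoint_closedNbr_iff {u v : V} (huv : u ≠ v) :
    Disjoint (closedNbr G u) (closedNbr G v) ↔ ¬ G.Adj u v ∧ ∀ x, ¬ (G.Adj u x ∧ G.Adj x v) := by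
  simp only [Finset.disjoint_left, mem_closedNbr]
  constructor
  · intro h
    exact ⟨fun hadj => h (Or.inl rfl) (Or.inr hadj.symm),
      fun x ⟨hux, hxv⟩ => h (Or.inr hux) (Or.inr hxv.symm)⟩
  · rintro ⟨hnadj, hncommon⟩ x (rfl | hux) (rfl | hvx)
    exacts [huv rfl, hnadj hvx.symm, hnadj hux, hncommon x ⟨hux, hvx.symm⟩]

lemma dispersed_iff_pairwiseDisjoint {D : Set V} :
    Dispersed G D ↔ D.PairwiseDisjoint (closedNbr G) :=
  forall₂_congr fun _ _ => forall₂_congr fun _ _ =>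
    forall_congr' fun huv => (disjoint_closedNbr_iff huv).symm

lemma wDominates_self (w : V → ℕ) (U : Set V) : WDominates G w w U :=
  fun u _ => single_le_sum (fun _ _ => Nat.zero_le _) (self_mem_closedNbr u)

lemma WDominates.sum_le_of_pairwiseDisjoint {w f : V → ℕ} {D : Finset V}
    (hf : WDominates G w f D) (hD : (D : Set V).PairwiseDisjoint (closedNbr G)) :
    ∑ d ∈ D, w d ≤ ∑ v, f v :=
  calc ∑ d ∈ D, w d ≤ ∑ d ∈ D, ∑ x ∈ closedNbr G d, f x := sum_le_sum fun d hd => hf d hd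
    _ = ∑ x ∈ D.biUnion (closedNbr G), f x := (sum_biUnion hD).symm
    _ ≤ ∑ v, f v := sum_le_sum_of_subset (subset_univ _)

lemma gammaW_le {w f : V → ℕ} (hf : WDominates G w f Set.univ) : gammaW G w ≤ ∑ v, f v :=
  Nat.sInf_le ⟨f, hf, rfl⟩

lemma exists_wDominates_sum_eq_gammaW (w : V → ℕ) :
    ∃ f, WDominates G w f Set.univ ∧ ∑ v, f v = gammaW G w :=
  Nat.sInf_mem (s := {n | ∃ f : V → ℕ, WDominates G w f Set.univ ∧ ∑ v, f v = n})
    ⟨_, w, wDominates_self w _, rfl⟩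

lemma gammaIW_le_gammaW (w : V → ℕ) : gammaIW G w ≤ gammaW G w := by
  refine csSup_le ⟨_, ∅, by simp, rfl⟩ ?_
  rintro _ ⟨I, -, rfl⟩
  obtain ⟨f, hf, hsum⟩ := exists_wDominates_sum_eq_gammaW (G := G) w
  exact Nat.sInf_le ⟨f, fun u _ => hf u trivial, hsum⟩

lemma le_gammaIW {w : V → ℕ} {I : Set V} (hI : ∀ u ∈ I, ∀ v ∈ I, u ≠ v → ¬ G.Adj u v) :
    sInf {n | ∃ f : V → ℕ, WDominates G w f I ∧ ∑ v, f v = n} ≤ gammaIW G w := by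
  refine le_csSup ⟨∑ v, w v, ?_⟩ ⟨I, hI, rfl⟩
  rintro _ ⟨J, -, rfl⟩
  exact Nat.sInf_le ⟨w, wDominates_self w J, rfl⟩

lemma rhoW_le_gammaIW (w : V → ℕ) : rhoW G w ≤ gammaIW G w := by
  refine csSup_le ⟨0, ∅, by simp [Dispersed], rfl⟩ ?_
  rintro _ ⟨D, hD, rfl⟩
  refine le_trans ?_ (le_gammaIW fun u hu v hv huv => (hD u hu v hv huv).1)
  refine le_csInf ⟨_, w, wDominates_self w _, rfl⟩ ?_
  rintro _ ⟨f, hf, rfl⟩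
  exact hf.sum_le_of_pairwiseDisjoint (dispersed_iff_pairwiseDisjoint.mp hD)

variable (G) in
def lowerWeight (w : V → ℕ) (x : V) (c : ℕ) : V → ℕ :=
  fun v => if v ∈ closedNbr G x then w v - c else w v

lemma lowerWeight_le (w : V → ℕ) (x : V) (c : ℕ) (v : V) : lowerWeight G w x c v ≤ w v := by
  unfold lowerWeight; split_ifs <;> omega

lemma gammaW_le_gammaW_lowerWeight_add (w : V → ℕ) (x : V) (c : ℕ) :
    gammaW G w ≤ gammaW G (lowerWeight G w x c) + c := by
  obtain ⟨f, hf, hsum⟩ := exists_wDominates_sum_eq_gammaW (G := G) (lowerWeight G w x c)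
  have hdom : WDominates G w (f + Pi.single x c : V → ℕ) Set.univ := by
    intro u _
    have hu := hf u trivial
    simp only [lowerWeight, mem_closedNbr_comm (u := u)] at hu
    simp only [Pi.add_apply, sum_add_distrib, sum_pi_single']
    split_ifs at hu ⊢ <;> omega
  calc gammaW G w ≤ ∑ v, (f + Pi.single x c : V → ℕ) v := gammaW_le hdom
    _ = gammaW G (lowerWeight G w x c) + c := by
      simp only [Pi.add_apply, sum_add_distrib, sum_pi_single', if_pos (mem_univ x), hsum]

end Domination

section MaximumNeighbors

variable [Fintype V] [DecidableEq V]

/-- `e'` is a maximum neighbour of `e` relative to `S`, as in dually chordal graphs; taking `d = e`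
shows that `e'` is a neighbour of `e` or `e` itself. -/
def HasRelMaximumNeighbors (G : SimpleGraph V) [DecidableRel G.Adj] : Prop :=
  ∀ S : Set V, S.Nonempty → ∃ e ∈ S, ∃ e' : V,
    ∀ d ∈ S, ¬ Disjoint (closedNbr G e) (closedNbr G d) → d ∈ closedNbr G e'

variable {G : SimpleGraph V} [DecidableRel G.Adj]

lemma exists_pairwiseDisjoint_of_lowerWeight {w : V → ℕ} {e e' : V} (he : 0 < w e)
    (hmax : ∀ d, 0 < w d → ¬ Disjoint (closedNbr G e) (closedNbr G d) → d ∈ closedNbr G e')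
    {D' : Finset V} (hD' : (D' : Set V).PairwiseDisjoint (closedNbr G))
    (hpos : ∀ d ∈ D', 0 < lowerWeight G w e' (w e) d)
    (hle : gammaW G (lowerWeight G w e' (w e)) ≤ ∑ d ∈ D', lowerWeight G w e' (w e) d) :
    ∃ D : Finset V, (D : Set V).PairwiseDisjoint (closedNbr G) ∧ (∀ d ∈ D, 0 < w d) ∧
      gammaW G w ≤ ∑ d ∈ D, w d := by
  set w' := lowerWeight G w e' (w e)
  have hγ := gammaW_le_gammaW_lowerWeight_add (G := G) w e' (w e)
  have hwpos : ∀ d ∈ D', 0 < w d := fun d hd => (hpos d hd).trans_le (lowerWeight_le _ _ _ d)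
  by_cases hmeet : ∃ d ∈ D', d ∈ closedNbr G e'
  · obtain ⟨d, hd, hde'⟩ := hmeet
    have hwd : w' d + w e = w d := by
      have := hpos d hd
      simp only [w', lowerWeight, if_pos hde'] at this ⊢
      omega
    refine ⟨D', hD', hwpos, hγ.trans (le_trans (Nat.add_le_add_right hle _) ?_)⟩
    rw [← add_sum_erase _ _ hd, ← add_sum_erase _ _ hd, add_right_comm, hwd]
    exact Nat.add_le_add_left (sum_le_sum fun v _ => lowerWeight_le _ _ _ v) _
  · push Not at hmeet
    have he_notMem : e ∉ D' := fun h => hmeet e h (hmax e he (not_disjoint_closedNbr_self e))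
    have hw' : ∀ d ∈ D', w' d = w d := fun d hd => if_neg (hmeet d hd)
    refine ⟨insert e D', ?_, ?_, ?_⟩
    · rw [coe_insert]
      exact hD'.insert fun d hd _ => by_contra fun h => hmeet d hd (hmax d (hwpos d hd) h)
    · simpa [he] using hwpos
    · rw [sum_insert he_notMem, ← sum_congr rfl hw', add_comm]
      exact hγ.trans (Nat.add_le_add_right hle _)

theorem exists_pairwiseDisjoint_gammaW_le (hG : HasRelMaximumNeighbors G) (w : V → ℕ) :
    ∃ D : Finset V, (D : Set V).PairwiseDisjoint (closedNbr G) ∧ (∀ d ∈ D, 0 < w d) ∧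
      gammaW G w ≤ ∑ d ∈ D, w d := by
  induction hn : ∑ v, w v using Nat.strong_induction_on generalizing w with
  | _ n ih =>
  by_cases hS : {v | 0 < w v}.Nonempty
  · obtain ⟨e, he, e', hmax⟩ := hG _ hS
    have he' : e ∈ closedNbr G e' := hmax e he (not_disjoint_closedNbr_self e)
    have hlt : ∑ v, lowerWeight G w e' (w e) v < n := hn ▸ sum_lt_sum
      (fun v _ => lowerWeight_le w e' (w e) v)
      ⟨e, mem_univ e, by simpa [lowerWeight, if_pos he'] using he⟩
    obtain ⟨D', hD', hpos, hle⟩ := ih _ hlt _ rfl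
    exact exists_pairwiseDisjoint_of_lowerWeight he hmax hD' hpos hle
  · have hw : ∀ v, w v = 0 := fun v => Nat.eq_zero_of_not_pos fun h => hS ⟨v, h⟩
    refine ⟨∅, by simp, by simp, ?_⟩
    simpa using gammaW_le (G := G) (w := w) (f := 0) fun u _ => by simp [hw]

theorem gammaW_le_rhoW (hG : HasRelMaximumNeighbors G) (w : V → ℕ) : gammaW G w ≤ rhoW G w := by
  obtain ⟨D, hD, -, hle⟩ := exists_pairwiseDisjoint_gammaW_le hG w
  refine hle.trans (le_csSup ⟨∑ v, w v, ?_⟩ ⟨D, dispersed_iff_pairwiseDisjoint.mpr hD, rfl⟩)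
  rintro _ ⟨D, -, rfl⟩
  exact sum_le_sum_of_subset (subset_univ D)

end MaximumNeighbors

lemma Sym2.le_sup_of_mem {α : Type*} [SemilatticeSup α] {s : Sym2 α} {a : α} (h : a ∈ s) :
    a ≤ s.sup := by
  induction s with
  | _ x y => rcases Sym2.mem_iff.mp h with rfl | rfl <;> simp

namespace SimpleGraph.IsTree

variable {W : Type*} {T : SimpleGraph W} (hT : T.IsTree) {r : W}
include hT

lemma exists_adj_dist_add_one {y : W} (hy : y ≠ r) :
    ∃ p, T.Adj y p ∧ T.dist r p + 1 = T.dist r y := by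
  obtain ⟨P, hP⟩ := hT.connected.exists_walk_length_eq_dist y r
  cases P with
  | nil => exact absurd rfl hy
  | @cons _ p _ hyp Q =>
    refine ⟨p, hyp, ?_⟩
    have hQ : T.dist r p ≤ Q.length := by rw [dist_comm]; exact dist_le Q
    rw [Walk.length_cons, dist_comm] at hP
    rcases hT.dist_eq_dist_add_one_of_adj r hyp with h | h <;> omega

lemma eq_of_adj_of_dist_add_one {y p q : W} (hp : T.Adj y p) (hq : T.Adj y q)
    (hpd : T.dist r p + 1 = T.dist r y) (hqd : T.dist r q + 1 = T.dist r y) : p = q := by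
  classical
  obtain ⟨Q, hQ, -⟩ := hT.connected.exists_path_of_dist r y
  suffices ∀ p, T.Adj y p → T.dist r p + 1 = T.dist r y → p = Q.penultimate from
    (this p hp hpd).trans (this q hq hqd).symm
  intro p hp hpd
  obtain ⟨P, hP, hPl⟩ := hT.connected.exists_path_of_dist r p
  have hy : y ∉ P.support := fun hy => by
    have := (dist_le (P.takeUntil y hy)).trans (P.length_takeUntil_le_length hy)
    omega
  exact hT.isAcyclic.eq_penultimate_of_adj_end hQ hp
    (hT.isAcyclic.mem_support_of_ne_mem_support_of_adj_of_isPath hQ hP hp hy)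

lemma parent_mem_of_child_mem {v y : W} (hyv : T.Adj y v) (hy : T.dist r y = T.dist r v + 1)
    {d : Sym2 W} (hd : d ∈ T.edgeSet) (hyd : y ∈ d) (hdmax : ∀ z ∈ d, T.dist r z ≤ T.dist r y) :
    v ∈ d := by
  obtain ⟨z, rfl⟩ := Sym2.mem_iff_exists.mp hyd
  have hyz : T.Adj y z := hd
  rcases hT.dist_eq_dist_add_one_of_adj r hyz with h | h
  · rw [hT.eq_of_adj_of_dist_add_one hyv hyz hy.symm h.symm]; exact Sym2.mem_mk_right _ _
  · exact absurd (hdmax z (Sym2.mem_mk_right _ _)) (by omega)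

lemma mem_or_exists_parent_mem {v y : W} (hyv : y = v ∨ T.Adj y v) {d : Sym2 W}
    (hd : d ∈ T.edgeSet) (hyd : y ∈ d) (hdmax : ∀ z ∈ d, T.dist r z ≤ T.dist r v + 1) :
    v ∈ d ∨ ∃ p ∈ d, T.Adj v p ∧ T.dist r p + 1 = T.dist r v := by
  rcases hyv with rfl | hyv
  · exact .inl hyd
  rcases hT.dist_eq_dist_add_one_of_adj r hyv with h | h
  · exact .inl (hT.parent_mem_of_child_mem hyv h hd hyd (h ▸ hdmax))
  · exact .inr ⟨y, hyd, hyv.symm, h.symm⟩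

lemma mem_or_exists_parent_mem_of_meets {u v : W} (huv : T.Adj u v)
    (hu : T.dist r u = T.dist r v + 1) {h d : Sym2 W} (hh : h ∈ T.edgeSet) (hd : d ∈ T.edgeSet)
    (hdmax : ∀ z ∈ d, T.dist r z ≤ T.dist r u) {x y : W} (hxh : x ∈ h) (hx : x ∈ s(u, v))
    (hyh : y ∈ h) (hyd : y ∈ d) :
    v ∈ d ∨ ∃ p ∈ d, T.Adj v p ∧ T.dist r p + 1 = T.dist r v := by
  refine hT.mem_or_exists_parent_mem ?_ hd hyd (hu ▸ hdmax)
  have hxy : x = y ∨ T.Adj x y := by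
    by_cases hxy : x = y
    · exact .inl hxy
    · exact .inr (adj_iff_exists_edge.mpr ⟨hxy, h, hh, hxh, hyh⟩)
  rcases Sym2.mem_iff.mp hx with rfl | rfl
  · rcases hxy with rfl | hxy
    · exact .inr huv
    rcases hT.dist_eq_dist_add_one_of_adj r hxy with h | h
    · exact .inl (hT.eq_of_adj_of_dist_add_one hxy huv h.symm hu.symm)
    · exact absurd (hdmax y hyd) (by omega)
  · rcases hxy with rfl | hxy
    exacts [.inl rfl, .inr hxy.symm]

end SimpleGraph.IsTree

section LineGraph

variable {W : Type*} [DecidableEq W] {T : SimpleGraph W} [Fintype T.edgeSet]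
  {G : SimpleGraph T.edgeSet} [DecidableRel G.Adj]
  (hG : ∀ e f : T.edgeSet, G.Adj e f ↔ e ≠ f ∧ ∃ x : W, x ∈ (e : Sym2 W) ∧ x ∈ (f : Sym2 W))
include hG

lemma mem_closedNbr_iff_exists_mem {a b : T.edgeSet} :
    a ∈ closedNbr G b ↔ ∃ x : W, x ∈ (a : Sym2 W) ∧ x ∈ (b : Sym2 W) := by
  rw [mem_closedNbr, hG]
  constructor
  · rintro (rfl | ⟨-, x, hxb, hxa⟩)
    · obtain ⟨x, hx⟩ : ∃ x, x ∈ (a : Sym2 W) :=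
        (a : Sym2 W).ind fun x _ => ⟨x, Sym2.mem_mk_left _ _⟩
      exact ⟨x, hx, hx⟩
    · exact ⟨x, hxa, hxb⟩
  · rintro ⟨x, hxa, hxb⟩
    by_cases hab : a = b
    · exact .inl hab
    · exact .inr ⟨Ne.symm hab, x, hxb, hxa⟩

theorem hasRelMaximumNeighbors_of_isTree (hT : T.IsTree) : HasRelMaximumNeighbors G := by
  intro S hS
  obtain ⟨r⟩ := hT.connected.nonempty
  obtain ⟨e, heS, hemax⟩ :=
    S.exists_max_image (fun g : T.edgeSet => ((g : Sym2 W).map (T.dist r)).sup) S.toFinite hS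
  obtain ⟨u, v, huv, hu, he⟩ :
      ∃ u v, T.Adj u v ∧ T.dist r u = T.dist r v + 1 ∧ (e : Sym2 W) = s(u, v) := by
    obtain ⟨e, hab⟩ := e
    induction e with
    | _ a b =>
      rcases hT.dist_eq_dist_add_one_of_adj r hab with h | h
      · exact ⟨a, b, hab, h, rfl⟩
      · exact ⟨b, a, hab.symm, h, Sym2.eq_swap⟩
  have hdmax : ∀ d ∈ S, ∀ z ∈ (d : Sym2 W), T.dist r z ≤ T.dist r u := fun d hd z hz =>
    calc T.dist r z ≤ ((d : Sym2 W).map (T.dist r)).sup :=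
          Sym2.le_sup_of_mem (Sym2.mem_map.mpr ⟨z, hz, rfl⟩)
      _ ≤ ((e : Sym2 W).map (T.dist r)).sup := hemax d hd
      _ = T.dist r u := by rw [he, Sym2.map_mk, Sym2.sup_mk]; omega
  have hnear : ∀ d ∈ S, ¬ Disjoint (closedNbr G e) (closedNbr G d) →
      v ∈ (d : Sym2 W) ∨ ∃ p ∈ (d : Sym2 W), T.Adj v p ∧ T.dist r p + 1 = T.dist r v := by
    intro d hd hmeet
    obtain ⟨h, hhe, hhd⟩ := not_disjoint_iff.mp hmeet
    obtain ⟨x, hxh, hxe⟩ := (mem_closedNbr_iff_exists_mem hG).mp hhe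
    obtain ⟨y, hyh, hyd⟩ := (mem_closedNbr_iff_exists_mem hG).mp hhd
    exact hT.mem_or_exists_parent_mem_of_meets huv hu h.2 d.2 (hdmax d hd) hxh (he ▸ hxe) hyh hyd
  refine ⟨e, heS, ?_⟩
  by_cases hvr : v = r
  · refine ⟨e, fun d hd hmeet => (mem_closedNbr_iff_exists_mem hG).mpr ⟨v, ?_, by simp [he]⟩⟩
    rcases hnear d hd hmeet with hv | ⟨p, -, -, hp⟩
    · exact hv
    · simp [hvr] at hp
  · obtain ⟨p, hvp, hp⟩ := hT.exists_adj_dist_add_one hvr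
    refine ⟨⟨s(v, p), hvp⟩, fun d hd hmeet => (mem_closedNbr_iff_exists_mem hG).mpr ?_⟩
    rcases hnear d hd hmeet with hv | ⟨q, hq, hvq, hqd⟩
    · exact ⟨v, hv, Sym2.mem_mk_left _ _⟩
    · exact ⟨q, hq, hT.eq_of_adj_of_dist_add_one hvq hvp hqd hp ▸ Sym2.mem_mk_right _ _⟩

end LineGraph

theorem lineGraph_tree_gammaI_eq_gamma_general {W : Type*} [DecidableEq W]
    (T : SimpleGraph W) (hT : T.IsTree)
    [Fintype T.edgeSet]
    (G : SimpleGraph T.edgeSet) [DecidableRel G.Adj]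
    (hG : ∀ e f : T.edgeSet, G.Adj e f ↔
      e ≠ f ∧ ∃ x : W, x ∈ (e : Sym2 W) ∧ x ∈ (f : Sym2 W))
    (w : T.edgeSet → ℕ) :
    gammaIW G w = gammaW G w :=
  le_antisymm (gammaIW_le_gammaW w)
    ((gammaW_le_rhoW (hasRelMaximumNeighbors_of_isTree hG hT) w).trans (rhoW_le_gammaIW w))

/-- For the line graph `G` of a finite tree `T`, `γ^i_w(G) = γ_w(G)`
for every weight function `w`. -/
theorem lineGraph_tree_gammaI_eq_gamma {W : Type*} [Fintype W] [DecidableEq W]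
    (T : SimpleGraph W) [DecidableRel T.Adj] (hT : T.IsTree)
    [Fintype T.edgeSet]
    (G : SimpleGraph T.edgeSet) [DecidableRel G.Adj]
    (hG : ∀ e f : T.edgeSet, G.Adj e f ↔
      e ≠ f ∧ ∃ x : W, x ∈ (e : Sym2 W) ∧ x ∈ (f : Sym2 W))
    (w : T.edgeSet → ℕ) :
    gammaIW G w = gammaW G w :=
  lineGraph_tree_gammaI_eq_gamma_general T hT G hG w
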